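/- arXiv:1303.6470 — 6 statements merged into one kernel-verified Lean document; each statement's English description precedes it below -/
import Mathlib

section
/- Let k be a field, S = k[x_1,…,x_N] a polynomial ring, D = k[t]/(t²) and S' = S[t]/(t²). Let I ⊆ S be an ideal and I' ⊆ S' an ideal whose image under the reduction map S' → S, t ↦ 0, equals I. Let φ : S^p → I be a surjective S-module homomorphism and φ' : (S')^p → I' a surjective S'-module homomorphism whose reduction modulo t is φ. Then I' is a first order deformation of I (i.e., S'/I' is flat as a D-module and (S'/I') ⊗_D k ≅ S/I) if and only if every element of ker(φ) is the image, under reduction modulo t, of some element of ker(φ'); that is, if and only if every relation of I lifts to a relation of I'. -/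
/-!
Over the dual numbers `D = k[t]/(t²)`, a principal ideal ring whose elements are units or
multiples of `t`, a module `M` is flat iff `ann_M(t) = t M`. For `M = S'/I'` with `I' = im φ'`:
if `t f = φ' v`, then `v` reduces to a relation of `φ`; a lift `v'` of it gives
`v - v' = t w` and `t (f - φ' w) = 0`, so `f ∈ t S' + I'` because `S'` is `D`-free.
Conversely, an arbitrary lift `r₀` of a relation `r` has `φ' r₀ = t f` with `t f ∈ I'`;
flatness writes `f = t g + φ' w`, and `r₀ - t w` is a relation of `φ'` lifting `r`.
-/

open MvPolynomial

noncomputable section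

/-- The dual numbers `D = k[t]/(t²)`. -/
def DD (k : Type) [Field k] : Type := Polynomial k ⧸ (Ideal.span {(Polynomial.X : Polynomial k)^2})

instance (k : Type) [Field k] : CommRing (DD k) := Ideal.Quotient.commRing _
instance (k : Type) [Field k] : Algebra k (DD k) := Ideal.Quotient.algebra k

/-- The ring `S' = S[t]/(t²) = D[xᵢ]`, for variables indexed by `σ`. -/
def SP (k : Type) [Field k] (σ : Type) : Type := MvPolynomial σ (DD k)

noncomputable instance (k : Type) [Field k] (σ : Type) : CommRing (SP k σ) :=
  inferInstanceAs (CommRing (MvPolynomial σ (DD k)))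
noncomputable instance (k : Type) [Field k] (σ : Type) : Algebra (DD k) (SP k σ) :=
  inferInstanceAs (Algebra (DD k) (MvPolynomial σ (DD k)))

/-- The reduction `k[t]/(t²) → k`, `t ↦ 0`. -/
def DDred (k : Type) [Field k] : DD k →+* k :=
  Ideal.Quotient.lift _ (Polynomial.evalRingHom 0)
    (by
      intro a ha
      have h : Ideal.span {(Polynomial.X : Polynomial k)^2} ≤
          RingHom.ker (Polynomial.evalRingHom (0:k)) := by
        rw [Ideal.span_le]
        intro x hx
        simp only [Set.mem_singleton_iff] at hx
        subst hx
        simp [RingHom.mem_ker]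
      simpa [RingHom.mem_ker] using h ha)

/-- The reduction map `S' → S`, `t ↦ 0`. -/
def red (k : Type) [Field k] (σ : Type) : SP k σ →+* MvPolynomial σ k :=
  MvPolynomial.map (DDred k)

/-- `I' ⊆ S'` is a first order deformation of `I ⊆ S` :
`S'/I'` is flat over the dual numbers `D = k[t]/(t²)` and the image of `I'` under the
reduction map `S' → S`, `t ↦ 0`, is `I` (so that `(S'/I') ⊗_D k ≅ S/I`). -/
def IsFOD (k : Type) [Field k] (σ : Type) (I : Ideal (MvPolynomial σ k))
    (I' : Ideal (SP k σ)) : Prop :=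
  Module.Flat (DD k) (SP k σ ⧸ I') ∧ Ideal.map (red k σ) I' = I

open TensorProduct

namespace Module.Flat

variable {R M : Type*} [CommRing R] [AddCommGroup M] [Module R M]

theorem mem_annihilator_smul_top_of_smul_eq_zero [Flat R M] {a : R} {m : M} (h : a • m = 0) :
    m ∈ (R ∙ a).annihilator • (⊤ : Submodule R M) := by
  obtain ⟨κ, b, y, hm, hb⟩ := isTrivialRelation_of_sum_smul_eq_zero
    (f := fun _ : Unit => a) (x := fun _ => m) (by simpa using h)
  rw [show m = _ from hm ()]
  refine Submodule.sum_mem _ fun j _ => Submodule.smul_mem_smul ?_ trivial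
  rw [Submodule.mem_annihilator_span_singleton, smul_eq_mul, mul_comm]
  simpa using hb j

theorem of_forall_mem_annihilator_smul_top [IsPrincipalIdealRing R]
    (h : ∀ (a : R) (m : M), a • m = 0 →
      m ∈ (R ∙ a).annihilator • (⊤ : Submodule R M)) :
    Flat R M := by
  refine iff_rTensor_injective'.2 fun I => ?_
  obtain ⟨a, rfl⟩ := (IsPrincipalIdealRing.principal I).principal
  set a' : R ∙ a := ⟨a, Submodule.mem_span_singleton_self a⟩
  have hgen : ∀ z : (R ∙ a) ⊗[R] M, ∃ m, z = a' ⊗ₜ m := by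
    intro z
    induction z with
    | zero => exact ⟨0, (tmul_zero _ _).symm⟩
    | tmul b m =>
      obtain ⟨c, hc⟩ := Submodule.mem_span_singleton.1 b.2
      exact ⟨c • m, by rw [← smul_tmul]; congr; exact Subtype.ext hc.symm⟩
    | add x y hx hy =>
      obtain ⟨m₁, rfl⟩ := hx
      obtain ⟨m₂, rfl⟩ := hy
      exact ⟨m₁ + m₂, (tmul_add _ _ _).symm⟩
  refine (injective_iff_map_eq_zero _).2 fun z hz => ?_
  obtain ⟨m, rfl⟩ := hgen z
  have ham : a • m = 0 := by simpa using congrArg (TensorProduct.lid R M) hz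
  refine Submodule.smul_induction_on (p := fun m => a' ⊗ₜ[R] m = 0) (h a m ham) ?_ ?_
  · intro b hb y _
    rw [← smul_tmul, show b • a' = 0 from Subtype.ext
      ((Submodule.mem_annihilator_span_singleton a b).1 hb), zero_tmul]
  · intro x y hx hy
    rw [tmul_add, hx, hy, add_zero]

end Module.Flat

namespace DD

variable (k : Type) [Field k]

def mk : Polynomial k →+* DD k := Ideal.Quotient.mk _

def t : DD k := mk k Polynomial.X

theorem mk_surjective : Function.Surjective (mk k) := Ideal.Quotient.mk_surjective

instance : IsPrincipalIdealRing (DD k) :=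
  IsPrincipalIdealRing.of_surjective (mk k) (mk_surjective k)

variable {k}

theorem mk_eq_zero_iff {P : Polynomial k} : mk k P = 0 ↔ Polynomial.X ^ 2 ∣ P :=
  Ideal.Quotient.eq_zero_iff_mem.trans Ideal.mem_span_singleton

theorem DDred_mk (P : Polynomial k) : DDred k (mk k P) = P.eval 0 :=
  Ideal.Quotient.lift_mk _ _ _

variable (k) in
theorem t_mul_t : t k * t k = 0 := by
  rw [t, ← map_mul, mk_eq_zero_iff, pow_two]

theorem mk_mem_span_t_of_X_dvd {P : Polynomial k} (h : Polynomial.X ∣ P) :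
    mk k P ∈ Ideal.span {t k} := by
  obtain ⟨Q, rfl⟩ := h
  rw [map_mul, mul_comm]
  exact Ideal.mul_mem_left _ _ (Ideal.subset_span rfl)

theorem mem_span_t_or_isUnit (a : DD k) : a ∈ Ideal.span {t k} ∨ IsUnit a := by
  obtain ⟨P, rfl⟩ := mk_surjective k a
  by_cases hP : Polynomial.X ∣ P
  · exact Or.inl (mk_mem_span_t_of_X_dvd hP)
  · obtain ⟨u, v, huv⟩ :=
      ((Polynomial.irreducible_X.coprime_iff_not_dvd.2 hP).pow_left (m := 2)).symm
    refine Or.inr (IsUnit.of_mul_eq_one (mk k u) ?_)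
    rw [← map_mul, ← sub_eq_zero, ← map_one (mk k), ← map_sub, mk_eq_zero_iff, ← huv,
      mul_comm P, sub_add_cancel_left, dvd_neg]
    exact dvd_mul_left _ _

theorem mem_span_t_of_t_mul_eq_zero {a : DD k} (h : t k * a = 0) : a ∈ Ideal.span {t k} := by
  obtain ⟨P, rfl⟩ := mk_surjective k a
  rw [t, ← map_mul, mk_eq_zero_iff, pow_two] at h
  exact mk_mem_span_t_of_X_dvd ((mul_dvd_mul_iff_left Polynomial.X_ne_zero).1 h)

theorem DDred_algebraMap (c : k) : DDred k (algebraMap k (DD k) c) = c :=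
  (DDred_mk (Polynomial.C c)).trans Polynomial.eval_C

theorem ker_DDred : RingHom.ker (DDred k) = Ideal.span {t k} := by
  refine le_antisymm (fun a ha => ?_) ?_
  · obtain ⟨P, rfl⟩ := mk_surjective k a
    rw [RingHom.mem_ker, DDred_mk, ← Polynomial.coeff_zero_eq_eval_zero] at ha
    exact mk_mem_span_t_of_X_dvd (Polynomial.X_dvd_iff.2 ha)
  · rw [Ideal.span_le, Set.singleton_subset_iff, SetLike.mem_coe, RingHom.mem_ker, t, DDred_mk,
      Polynomial.eval_X]

theorem flat_iff (M : Type*) [AddCommGroup M] [Module (DD k) M] :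
    Module.Flat (DD k) M ↔ ∀ m : M, t k • m = 0 → ∃ n, m = t k • n := by
  constructor
  · intro _ m hm
    have hann : (DD k ∙ t k).annihilator ≤ Ideal.span {t k} := fun b hb =>
      mem_span_t_of_t_mul_eq_zero (by
        rw [mul_comm, ← smul_eq_mul]; exact (Submodule.mem_annihilator_span_singleton _ _).1 hb)
    have := Submodule.smul_mono_left hann (Module.Flat.mem_annihilator_smul_top_of_smul_eq_zero hm)
    rw [Submodule.ideal_span_singleton_smul, Submodule.mem_smul_pointwise_iff_exists] at this
    obtain ⟨n, -, hn⟩ := this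
    exact ⟨n, hn.symm⟩
  · intro h
    refine Module.Flat.of_forall_mem_annihilator_smul_top fun a m ham => ?_
    rcases mem_span_t_or_isUnit a with ha | ha
    · obtain ⟨c, rfl⟩ := Ideal.mem_span_singleton'.1 ha
      rcases mem_span_t_or_isUnit c with hc | hc
      · obtain ⟨d, rfl⟩ := Ideal.mem_span_singleton'.1 hc
        rw [mul_assoc, t_mul_t, mul_zero, Submodule.span_zero_singleton, Submodule.annihilator_bot,
          Submodule.top_smul]
        trivial
      · obtain ⟨n, rfl⟩ := h m (by rwa [← smul_smul, hc.smul_eq_zero] at ham)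
        refine Submodule.smul_mem_smul ?_ trivial
        rw [Submodule.mem_annihilator_span_singleton, smul_eq_mul, mul_left_comm, t_mul_t, mul_zero]
    · rw [ha.smul_eq_zero.1 ham]
      exact zero_mem _

end DD

theorem Ideal.Quotient.forall_smul_eq_zero_imp_iff {R A : Type*} [CommRing R] [CommRing A]
    [Algebra R A] (J : Ideal A) (r : R) :
    (∀ m : A ⧸ J, r • m = 0 → ∃ n, m = r • n) ↔
      ∀ f : A, algebraMap R A r * f ∈ J → ∃ g, f - algebraMap R A r * g ∈ J := by
  have hmk : ∀ f : A, r • Ideal.Quotient.mk J f = Ideal.Quotient.mk J (algebraMap R A r * f) :=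
    fun f => by rw [Algebra.smul_def, ← Ideal.Quotient.mk_algebraMap, ← map_mul]
  refine ⟨fun h f hf => ?_, fun h m hm => ?_⟩
  · obtain ⟨n, hn⟩ := h (Ideal.Quotient.mk J f) (by rwa [hmk, Ideal.Quotient.eq_zero_iff_mem])
    obtain ⟨g, rfl⟩ := Ideal.Quotient.mk_surjective n
    exact ⟨g, Ideal.Quotient.eq.1 (by rw [hn, hmk])⟩
  · obtain ⟨f, rfl⟩ := Ideal.Quotient.mk_surjective m
    obtain ⟨g, hg⟩ := h f (by rwa [hmk, Ideal.Quotient.eq_zero_iff_mem] at hm)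
    exact ⟨Ideal.Quotient.mk J g, by rw [hmk, Ideal.Quotient.eq]; exact hg⟩

section RelationLifting

variable {A B ι : Type*} [CommRing A] [CommRing B] {π : A →+* B} {τ : A}
  {φ' : (ι → A) →ₗ[A] A} {φ : (ι → B) →ₗ[B] B}

theorem exists_relation_lift (hπ : Function.Surjective π)
    (hker : RingHom.ker π = Ideal.span {τ})
    (hτ : τ * τ = 0) (hcompat : ∀ v, π (φ' v) = φ (fun i => π (v i)))
    (hJ : ∀ f, τ * f ∈ LinearMap.range φ' → ∃ g, f - τ * g ∈ LinearMap.range φ')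
    {r : ι → B} (hr : φ r = 0) : ∃ r', φ' r' = 0 ∧ (fun i => π (r' i)) = r := by
  have hπτ : π τ = 0 := RingHom.mem_ker.1 (hker ▸ Ideal.subset_span rfl)
  choose r₀ hr₀ using fun i => hπ (r i)
  have : φ' r₀ ∈ Ideal.span {τ} := by
    rw [← hker, RingHom.mem_ker, hcompat, funext hr₀, hr]
  obtain ⟨f, hf⟩ := Ideal.mem_span_singleton'.1 this
  obtain ⟨g, w, hw⟩ := hJ f ⟨r₀, by rw [← hf, mul_comm]⟩
  refine ⟨r₀ - τ • w, ?_, funext fun i => ?_⟩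
  · rw [map_sub, map_smul, hw, ← hf, smul_eq_mul]
    linear_combination g * hτ
  · simp [hπτ, hr₀]

theorem exists_sub_mul_mem_range_of_relations_lift (hker : RingHom.ker π = Ideal.span {τ})
    (hann : ∀ f, τ * f = 0 → ∃ g, f = τ * g)
    (hcompat : ∀ v, π (φ' v) = φ (fun i => π (v i)))
    (hlift : ∀ r, φ r = 0 → ∃ r', φ' r' = 0 ∧ (fun i => π (r' i)) = r)
    {f : A} (hf : τ * f ∈ LinearMap.range φ') : ∃ g, f - τ * g ∈ LinearMap.range φ' := by
  have hπτ : π τ = 0 := RingHom.mem_ker.1 (hker ▸ Ideal.subset_span rfl)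
  obtain ⟨v, hv⟩ := hf
  obtain ⟨v', hv'0, hv'⟩ :=
    hlift (fun i => π (v i)) (by rw [← hcompat, hv, map_mul, hπτ, zero_mul])
  have hvv' : ∀ i, v i - v' i ∈ Ideal.span {τ} := fun i => by
    rw [← hker, RingHom.mem_ker, map_sub, congrFun hv' i, sub_self]
  choose w hw using fun i => Ideal.mem_span_singleton'.1 (hvv' i)
  have hvw : v - v' = τ • w := funext fun i => by simp [← hw i, mul_comm]
  obtain ⟨g, hg⟩ := hann (f - φ' w) <| calc
    τ * (f - φ' w) = φ' v - φ' v' - τ * φ' w := by rw [hv, hv'0]; ring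
    _ = φ' (v - v' - τ • w) := by rw [map_sub, map_sub, map_smul, smul_eq_mul]
    _ = 0 := by rw [hvw, sub_self, map_zero]
  exact ⟨g, w, by rw [← hg, sub_sub_cancel]⟩

theorem forall_exists_sub_mul_mem_range_iff_relations_lift (hπ : Function.Surjective π)
    (hker : RingHom.ker π = Ideal.span {τ}) (hτ : τ * τ = 0)
    (hann : ∀ f, τ * f = 0 → ∃ g, f = τ * g)
    (hcompat : ∀ v, π (φ' v) = φ (fun i => π (v i))) :
    (∀ f, τ * f ∈ LinearMap.range φ' → ∃ g, f - τ * g ∈ LinearMap.range φ') ↔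
      ∀ r, φ r = 0 → ∃ r', φ' r' = 0 ∧ (fun i => π (r' i)) = r :=
  ⟨fun hJ _ => exists_relation_lift hπ hker hτ hcompat hJ,
    fun hlift _ => exists_sub_mul_mem_range_of_relations_lift hker hann hcompat hlift⟩

end RelationLifting

section Reduction

variable (k : Type) [Field k] (σ : Type)

theorem red_surjective : Function.Surjective (red k σ) :=
  MvPolynomial.map_surjective _ fun c => ⟨_, DD.DDred_algebraMap c⟩

theorem ker_red : RingHom.ker (red k σ) = Ideal.span {algebraMap (DD k) (SP k σ) (DD.t k)} := by
  change RingHom.ker (MvPolynomial.map (DDred k) : MvPolynomial σ (DD k) →+* _) =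
    Ideal.span {MvPolynomial.C (DD.t k)}
  rw [MvPolynomial.ker_map, DD.ker_DDred, Ideal.map_span, Set.image_singleton]

theorem algebraMap_t_mul_self :
    algebraMap (DD k) (SP k σ) (DD.t k) * algebraMap (DD k) (SP k σ) (DD.t k) = 0 := by
  rw [← map_mul, DD.t_mul_t, map_zero]

theorem exists_eq_algebraMap_t_mul (f : SP k σ)
    (hf : algebraMap (DD k) (SP k σ) (DD.t k) * f = 0) :
    ∃ g, f = algebraMap (DD k) (SP k σ) (DD.t k) * g := by
  have : Module.Flat (DD k) (SP k σ) :=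
    inferInstanceAs (Module.Flat (DD k) (MvPolynomial σ (DD k)))
  simpa only [Algebra.smul_def] using (DD.flat_iff (SP k σ)).1 this f (by rwa [Algebra.smul_def])

end Reduction

theorem statement0_general (k : Type) [Field k] (N p : ℕ)
    (I : Ideal (MvPolynomial (Fin N) k)) (I' : Ideal (SP k (Fin N)))
    (hred : Ideal.map (red k (Fin N)) I' = I)
    (φ : (Fin p → MvPolynomial (Fin N) k) →ₗ[MvPolynomial (Fin N) k] MvPolynomial (Fin N) k)
    (φ' : (Fin p → SP k (Fin N)) →ₗ[SP k (Fin N)] SP k (Fin N))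
    (hφ' : LinearMap.range φ' = I')
    (hcompat : ∀ v : Fin p → SP k (Fin N),
      red k (Fin N) (φ' v) = φ (fun i => red k (Fin N) (v i))) :
    IsFOD k (Fin N) I I' ↔
      ∀ r : Fin p → MvPolynomial (Fin N) k, φ r = 0 →
        ∃ r' : Fin p → SP k (Fin N), φ' r' = 0 ∧ (fun i => red k (Fin N) (r' i)) = r := by
  rw [IsFOD, and_iff_left hred, DD.flat_iff, Ideal.Quotient.forall_smul_eq_zero_imp_iff, ← hφ']
  exact forall_exists_sub_mul_mem_range_iff_relations_lift (red_surjective k _) (ker_red k _)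
    (algebraMap_t_mul_self k _) (exists_eq_algebraMap_t_mul k _) hcompat

theorem statement0 (k : Type) [Field k] (N p : ℕ)
    (I : Ideal (MvPolynomial (Fin N) k)) (I' : Ideal (SP k (Fin N)))
    (hred : Ideal.map (red k (Fin N)) I' = I)
    (φ : (Fin p → MvPolynomial (Fin N) k) →ₗ[MvPolynomial (Fin N) k] MvPolynomial (Fin N) k)
    (hφ : LinearMap.range φ = I)
    (φ' : (Fin p → SP k (Fin N)) →ₗ[SP k (Fin N)] SP k (Fin N))
    (hφ' : LinearMap.range φ' = I')
    (hcompat : ∀ v : Fin p → SP k (Fin N),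
      red k (Fin N) (φ' v) = φ (fun i => red k (Fin N) (v i))) :
    IsFOD k (Fin N) I I' ↔
      ∀ r : Fin p → MvPolynomial (Fin N) k, φ r = 0 →
        ∃ r' : Fin p → SP k (Fin N), φ' r' = 0 ∧ (fun i => red k (Fin N) (r' i)) = r :=
  statement0_general k N p I I' hred φ φ' hφ' hcompat
end
end

section
/- Let n = 2 and let φ be the k-algebra automorphism of S̃ = k[x_{1j}, x_{2j} : 1 ≤ j ≤ d] determined by φ(x_{1j}) = x_{1j} and φ(x_{2j}) = x_{2(d−j+1)} for all 1 ≤ j ≤ d. Then φ maps the standard polarization onto the box polarization: φ(P_{2d}) = B_{2d}. -/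
/-!
Statement 6: For `n = 2`, the `k`-algebra automorphism `φ` of `S̃` determined by
`φ(x_{1j}) = x_{1j}` and `φ(x_{2j}) = x_{2(d−j+1)}` maps the standard polarization onto the
box polarization: `φ(P_{2d}) = B_{2d}`.
-/

set_option synthInstance.maxHeartbeats 800000
set_option maxHeartbeats 1600000

open MvPolynomial

noncomputable section

/-- The box polarization `B_{nd}` of `m^d`. -/
def BoxIdeal (k : Type) [Field k] (n d : ℕ) : Ideal (MvPolynomial (Fin n × Fin d) k) :=
  Ideal.span {f | ∃ i : Fin d → Fin n, Monotone i ∧ f = ∏ j : Fin d, X (i j, j)}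

/-- The standard polarization `P_{nd}` of `m^d`. -/
def StdIdeal (k : Type) [Field k] (n d : ℕ) : Ideal (MvPolynomial (Fin n × Fin d) k) :=
  Ideal.span {f | ∃ e : Fin n → ℕ, (∑ i, e i) = d ∧
    f = ∏ p : Fin n × Fin d, if (p.2 : ℕ) < e p.1 then X p else 1}

lemma key (k : Type) [Field k] (d : ℕ)
    (φ : MvPolynomial (Fin 2 × Fin d) k ≃ₐ[k] MvPolynomial (Fin 2 × Fin d) k)
    (h1 : ∀ j : Fin d, φ (X ((0 : Fin 2), j)) = X ((0 : Fin 2), j))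
    (h2 : ∀ j : Fin d, φ (X ((1 : Fin 2), j)) = X ((1 : Fin 2), j.rev))
    (a : ℕ) (ha : a ≤ d) :
    φ (∏ p : Fin 2 × Fin d,
        if (p.2 : ℕ) < (if p.1 = 0 then a else d - a) then X p else 1)
    = ∏ j : Fin d, X ((if (j : ℕ) < a then 0 else 1 : Fin 2), j) := by
  rw [map_prod]
  have hite : ∀ p : Fin 2 × Fin d,
      φ (if (p.2 : ℕ) < (if p.1 = 0 then a else d - a) then X p else 1)
      = if (p.2 : ℕ) < (if p.1 = 0 then a else d - a) then φ (X p) else 1 := by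
    intro p; split_ifs <;> simp
  simp only [hite]
  rw [Fintype.prod_prod_type]
  rw [Fin.prod_univ_two]
  have c0 : ((0 : Fin 2) = 0) = True := by simp
  have c1 : ((1 : Fin 2) = 0) = False := by simp
  simp only [h1, h2, c0, c1, if_true, if_false]
  have hrev : (∏ j : Fin d, if (j : ℕ) < d - a then (X ((1 : Fin 2), j.rev) : MvPolynomial (Fin 2 × Fin d) k) else 1)
      = ∏ j : Fin d, if ¬ ((j : ℕ) < a) then (X ((1 : Fin 2), j) : MvPolynomial (Fin 2 × Fin d) k) else 1 := by
    rw [← Equiv.prod_comp Fin.revPerm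
      (fun j : Fin d => if ¬ ((j : ℕ) < a) then (X ((1 : Fin 2), j) : MvPolynomial (Fin 2 × Fin d) k) else 1)]
    refine Finset.prod_congr rfl fun j _ => ?_
    have hj : (j : ℕ) < d := j.isLt
    simp only [Fin.revPerm_apply, Fin.val_rev]
    have hc : (j : ℕ) < d - a ↔ ¬ (d - ((j : ℕ) + 1) < a) := by omega
    split_ifs with hA hB <;> first | rfl | omega
  rw [hrev, ← Finset.prod_mul_distrib]
  refine Finset.prod_congr rfl fun j _ => ?_
  split_ifs with h
  · simp
  · simp

theorem statement6 (k : Type) [Field k] (d : ℕ)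
    (φ : MvPolynomial (Fin 2 × Fin d) k ≃ₐ[k] MvPolynomial (Fin 2 × Fin d) k)
    (h1 : ∀ j : Fin d, φ (X ((0 : Fin 2), j)) = X ((0 : Fin 2), j))
    (h2 : ∀ j : Fin d, φ (X ((1 : Fin 2), j)) = X ((1 : Fin 2), j.rev)) :
    Ideal.map φ (StdIdeal k 2 d) = BoxIdeal k 2 d := by
  apply le_antisymm
  · rw [StdIdeal, Ideal.map_span, Ideal.span_le]
    rintro x ⟨g, ⟨e, hsum, rfl⟩, rfl⟩
    have he1 : e 1 = d - e 0 := by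
      rw [Fin.sum_univ_two] at hsum; omega
    have ha : e 0 ≤ d := by rw [Fin.sum_univ_two] at hsum; omega
    have heq : e = fun i : Fin 2 => if i = 0 then e 0 else d - e 0 := by
      funext i; fin_cases i <;> simp [he1]
    apply Ideal.subset_span
    refine ⟨fun j => if (j : ℕ) < e 0 then 0 else 1, ?_, ?_⟩
    · intro j j' hjj'
      have hjj : (j : ℕ) ≤ (j' : ℕ) := hjj'
      dsimp only
      split_ifs with hA hB hB
      · exact le_refl _
      · exact Fin.zero_le _
      · exact absurd hB (by omega)
      · exact le_refl _
    · dsimp only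
      have hg : (∏ p : Fin 2 × Fin d, if (p.2 : ℕ) < e p.1 then X p else (1 : MvPolynomial (Fin 2 × Fin d) k))
          = ∏ p : Fin 2 × Fin d, if (p.2 : ℕ) < (if p.1 = 0 then e 0 else d - e 0) then X p else 1 :=
        Finset.prod_congr rfl fun p _ => by rw [congrFun heq p.1]
      rw [hg]
      exact key k d φ h1 h2 (e 0) ha
  · rw [BoxIdeal, Ideal.span_le]
    rintro x ⟨i, hmono, rfl⟩
    set a : ℕ := (Finset.univ.filter (fun j : Fin d => i j = 0)).card with hadef
    have ha : a ≤ d := by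
      calc a ≤ Finset.univ.card := Finset.card_filter_le _ _
        _ = d := by simp
    have hi : ∀ j : Fin d, i j = if (j : ℕ) < a then 0 else 1 := by
      intro j
      by_cases h0 : i j = 0
      · have hsub : Finset.Iic j ⊆ Finset.univ.filter (fun j' : Fin d => i j' = 0) := by
          intro j' hj'
          simp only [Finset.mem_Iic] at hj'
          simp only [Finset.mem_filter, Finset.mem_univ, true_and]
          have := hmono hj'
          rw [h0] at this
          exact Fin.le_zero_iff.mp this
        have : (j : ℕ) + 1 ≤ a := by
          have := Finset.card_le_card hsub
          rwa [Fin.card_Iic] at this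
        rw [h0, if_pos (by omega)]
      · have h1' : i j = 1 := by omega
        have hsub : Finset.univ.filter (fun j' : Fin d => i j' = 0) ⊆ Finset.Iio j := by
          intro j' hj'
          simp only [Finset.mem_filter, Finset.mem_univ, true_and] at hj'
          simp only [Finset.mem_Iio]
          by_contra hle
          push_neg at hle
          have := hmono hle
          rw [h1', hj'] at this
          exact absurd this (by decide)
        have : a ≤ (j : ℕ) := by
          have := Finset.card_le_card hsub
          rwa [Fin.card_Iio] at this
        rw [h1', if_neg (by omega)]
    have hfeq : (∏ j : Fin d, X (i j, j))
        = (∏ j : Fin d, (X ((if (j : ℕ) < a then 0 else 1 : Fin 2), j)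
            : MvPolynomial (Fin 2 × Fin d) k)) := by
      refine Finset.prod_congr rfl fun j _ => ?_
      rw [hi j]
    rw [hfeq, ← key k d φ h1 h2 a ha]
    apply Ideal.mem_map_of_mem
    apply Ideal.subset_span
    exact ⟨fun i : Fin 2 => if i = 0 then a else d - a, by rw [Fin.sum_univ_two]; simp; omega, rfl⟩


end
end

section
/- Let P ⊆ S̃ be a polarization of m^d all of whose minimal generators are squarefree monomials, with vertices v_i = x_{i1}x_{i2}···x_{id} for i = 1,…,n. Say that a pair (g, m), where g is a minimal generator of P and m is a monomial, is pushed in one step to (g', m') if g' = g·x_{ab}/x_{cl} is again a minimal generator of P (with x_{cl} dividing g), x_{cl} divides m, and m' = m·x_{ab}/x_{cl}; and say (f, m) can be pushed to (h, m̃) if there is a finite chain of such one-step pushes from (f, m) to (h, m̃). If f is a minimal generator of P, m is a monomial, and (f, m) can be pushed to (v_a, m_a) and also to (v_b, m_b) for two distinct indices a ≠ b, then f divides m. In particular, a proper first order deformation f + t·m of a generator f can be pushed successively to at most one vertex of P. -/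
/-!
Statement 11: Let `P ⊆ S̃` be a squarefree polarization of `m^d`, with vertices
`v_i = x_{i1}x_{i2}⋯x_{id}`.  If a pair `(f, m)` (a minimal generator together with a
monomial) can be pushed (through chains of one-step pushes along linear relations between
minimal generators) to two distinct vertices `v_a` and `v_b`, then `f` divides `m`.
In particular a proper first order deformation `f + t·m` of a generator can be pushed
to at most one vertex of `P`.
-/

set_option synthInstance.maxHeartbeats 800000
set_option maxHeartbeats 1600000

open MvPolynomial

noncomputable section

/-- `f` is a monomial (with coefficient `1`). -/
def IsMonomial (k : Type) [Field k] (σ : Type) (f : MvPolynomial σ k) : Prop :=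
  ∃ u : σ →₀ ℕ, f = monomial u 1

/-- `f` is a squarefree monomial. -/
def IsSqfreeMonomial (k : Type) [Field k] (σ : Type) (f : MvPolynomial σ k) : Prop :=
  ∃ u : σ →₀ ℕ, f = monomial u 1 ∧ ∀ p, u p ≤ 1

/-- `f` is a minimal monomial generator of the monomial ideal `P`. -/
def IsMinGen (k : Type) [Field k] (σ : Type) (P : Ideal (MvPolynomial σ k))
    (f : MvPolynomial σ k) : Prop :=
  IsMonomial k σ f ∧ f ∈ P ∧
    ∀ g : MvPolynomial σ k, IsMonomial k σ g → g ∣ f → g ≠ f → g ∉ P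

/-- The multiset of variable differences `x_{i1} − x_{ij}`, `1 ≤ i ≤ n`, `2 ≤ j ≤ d`. -/
def diffsM (k : Type) [Field k] (n d : ℕ) [NeZero d] :
    Multiset (MvPolynomial (Fin n × Fin d) k) :=
  ((Finset.univ : Finset (Fin n × Fin d)).filter (fun p => p.2 ≠ (0 : Fin d))).val.map
    (fun p => X (p.1, (0 : Fin d)) - X p)

/-- The depolarization map `S̃ → S = k[x₁,…,x_n]`, `x_{ij} ↦ x_i` (i.e. the quotient of
`S̃` by the variable differences). -/
def depol (k : Type) [Field k] (n d : ℕ) :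
    MvPolynomial (Fin n × Fin d) k →+* MvPolynomial (Fin n) k :=
  (MvPolynomial.aeval (fun p : Fin n × Fin d => (X p.1 : MvPolynomial (Fin n) k))).toRingHom

/-- `P ⊆ S̃` is a polarization of `m^d`: the variable differences (in any fixed order) form
a regular sequence on `S̃/P`, and quotienting by them (i.e. applying the depolarization
`x_{ij} ↦ x_i`) carries `P` to `m^d`. -/
def IsPolarization (k : Type) [Field k] (n d : ℕ) [NeZero d]
    (P : Ideal (MvPolynomial (Fin n × Fin d) k)) : Prop :=
  (∀ L : List (MvPolynomial (Fin n × Fin d) k), (↑L : Multiset _) = diffsM k n d →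
    RingTheory.Sequence.IsRegular (MvPolynomial (Fin n × Fin d) k ⧸ P) L) ∧
  Ideal.map (depol k n d) P =
    (Ideal.span (Set.range (X : Fin n → MvPolynomial (Fin n) k))) ^ d

/-- The vertex `v_i = x_{i1}x_{i2}⋯x_{id}`. -/
def vertex (k : Type) [Field k] (n d : ℕ) (i : Fin n) : MvPolynomial (Fin n × Fin d) k :=
  ∏ j : Fin d, X (i, j)

/-- One-step push of a pair (generator, monomial): `(g, m)` is pushed to
`(g·x_{ab}/x_{cl}, m·x_{ab}/x_{cl})`, where `g` and `g·x_{ab}/x_{cl}` are both minimal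
generators of `P` and `x_{cl}` divides both `g` and `m`.
Here `x_{ab} = X p` and `x_{cl} = X q`. -/
def PushStep (k : Type) [Field k] (n d : ℕ) (P : Ideal (MvPolynomial (Fin n × Fin d) k)) :
    (MvPolynomial (Fin n × Fin d) k × MvPolynomial (Fin n × Fin d) k) →
    (MvPolynomial (Fin n × Fin d) k × MvPolynomial (Fin n × Fin d) k) → Prop :=
  fun gm g'm' => ∃ p q : Fin n × Fin d,
    IsMinGen k (Fin n × Fin d) P gm.1 ∧ IsMinGen k (Fin n × Fin d) P g'm'.1 ∧
    X q ∣ gm.1 ∧ g'm'.1 * X q = gm.1 * X p ∧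
    X q ∣ gm.2 ∧ g'm'.2 * X q = gm.2 * X p

/- Each push multiplies both entries of the pair by the same factor `x_{ab}/x_{cl}`, so
`f·m' = g·m` along any chain from `(f, m)` to `(g, m')`.  Hence `f` divides both `v_a·m` and
`v_b·m`; for `a ≠ b` the vertices involve disjoint sets of variables, hence are relatively
prime in the factorial ring `S̃`, and therefore `f` divides `m`. -/

theorem IsRelPrime.dvd_of_dvd_mul_of_dvd_mul {α : Type*} [CommMonoidWithZero α]
    [IsCancelMulZero α] [DecompositionMonoid α] {x y z m : α} (hxy : IsRelPrime x y) (hx : z ∣ x * m)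
    (hy : z ∣ y * m) : z ∣ m := by
  obtain ⟨z₁, z₂, hz₁x, ⟨m', rfl⟩, rfl⟩ := exists_dvd_and_dvd_of_dvd_mul hx
  rcases eq_or_ne z₂ 0 with rfl | hz₂
  · simp
  have hz₁y : z₁ ∣ y * m' := by
    rw [← mul_dvd_mul_iff_right hz₂]
    simpa only [mul_comm, mul_left_comm] using hy
  simpa only [mul_comm] using
    mul_dvd_mul_left z₂ ((hxy.of_dvd_left hz₁x).dvd_of_dvd_mul_left hz₁y)

lemma isRelPrime_vertex (k : Type) [Field k] (n d : ℕ) {a b : Fin n} (hab : a ≠ b) :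
    IsRelPrime (vertex k n d a) (vertex k n d b) :=
  IsRelPrime.prod_left fun i _ => IsRelPrime.prod_right fun j _ =>
    X_prime.irreducible.isRelPrime_iff_not_dvd.2 (by simp [hab])

lemma PushStep.reflTransGen_mul_eq {k : Type} [Field k] {n d : ℕ}
    {P : Ideal (MvPolynomial (Fin n × Fin d) k)}
    {x y : MvPolynomial (Fin n × Fin d) k × MvPolynomial (Fin n × Fin d) k}
    (h : Relation.ReflTransGen (PushStep k n d P) x y) : x.1 * y.2 = y.1 * x.2 := by
  induction h with
  | refl => rfl
  | @tail y z _ hyz ih =>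
    obtain ⟨p, q, -, -, -, hz₁, -, hz₂⟩ := hyz
    apply mul_right_cancel₀ (X_ne_zero q)
    calc x.1 * z.2 * X q = (x.1 * y.2) * X p := by rw [mul_assoc, hz₂, mul_assoc]
      _ = (y.1 * X p) * x.2 := by rw [ih]; ring
      _ = z.1 * x.2 * X q := by rw [← hz₁]; ring

theorem statement11_general (k : Type) [Field k] (n d : ℕ)
    (P : Ideal (MvPolynomial (Fin n × Fin d) k))
    (f m : MvPolynomial (Fin n × Fin d) k)
    (a b : Fin n) (hab : a ≠ b) (ma mb : MvPolynomial (Fin n × Fin d) k)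
    (ha : Relation.ReflTransGen (PushStep k n d P) (f, m) (vertex k n d a, ma))
    (hb : Relation.ReflTransGen (PushStep k n d P) (f, m) (vertex k n d b, mb)) :
    f ∣ m :=
  IsRelPrime.dvd_of_dvd_mul_of_dvd_mul (isRelPrime_vertex k n d hab)
    ⟨ma, (PushStep.reflTransGen_mul_eq ha).symm⟩ ⟨mb, (PushStep.reflTransGen_mul_eq hb).symm⟩

theorem statement11 (k : Type) [Field k] (n d : ℕ) [NeZero d]
    (P : Ideal (MvPolynomial (Fin n × Fin d) k))
    (hpol : IsPolarization k n d P)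
    (hsf : ∀ g, IsMinGen k (Fin n × Fin d) P g → IsSqfreeMonomial k (Fin n × Fin d) g)
    (f m : MvPolynomial (Fin n × Fin d) k)
    (hf : IsMinGen k (Fin n × Fin d) P f) (hm : IsMonomial k (Fin n × Fin d) m)
    (a b : Fin n) (hab : a ≠ b) (ma mb : MvPolynomial (Fin n × Fin d) k)
    (ha : Relation.ReflTransGen (PushStep k n d P) (f, m) (vertex k n d a, ma))
    (hb : Relation.ReflTransGen (PushStep k n d P) (f, m) (vertex k n d b, mb)) :
    f ∣ m :=
  statement11_general k n d P f m a b hab ma mb ha hb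

end
end

section
/- Let f = x_{i₁1}x_{i₂2}···x_{i_dd} with 1 ≤ i₁ ≤ i₂ ≤ ··· ≤ i_d ≤ n be a generator of B_{nd}, and let m be a monomial of degree d in S̃ such that for every a with 1 ≤ a ≤ n, the monomial (∏_{j : i_j ≠ a} x_{aj})·m lies in B_{nd} (i.e., is divisible by a generator of B_{nd}). Then m itself lies in B_{nd}. Consequently, a proper first order deformation of a generator of B_{nd} cannot vanish when pushed toward every vertex, so it can be pushed to at least one vertex. -/
/-!
Statement 12: Let `f = x_{i₁1}x_{i₂2}⋯x_{i_dd}` (with `i₁ ≤ ⋯ ≤ i_d`) be a generator of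
the box polarization `B_{nd}`, and let `m` be a monomial of degree `d` such that for every
`a`, the monomial `(∏_{j : i_j ≠ a} x_{aj})·m` lies in `B_{nd}`.  Then `m ∈ B_{nd}`.
(Hence a proper first order deformation of a generator of `B_{nd}` cannot vanish when
pushed toward every vertex.)
-/

set_option synthInstance.maxHeartbeats 800000
set_option maxHeartbeats 1600000

open MvPolynomial

noncomputable section

/-!
Write `m = x^u`. A monomial lies in `B_{nd}` exactly when its support contains the graph
`{(c j, j)}` of a monotone `c`. Pushing toward `a = i_j` adds nothing to column `j`, so the
witness for that `a` shows that column `j` of `u` is nonempty; since `deg m = d`, every column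
then holds exactly one variable `x_{s_j j}`. For each `a` the witness `c` agrees with `s` except
at columns where `c j = a ≠ i_j`. If `s` had a descent `s t₁ < s t₀` with `t₀ ≤ t₁`, the witness
for `a = i_{t₀}` (when `i_{t₀} < s t₀`) or for `a = i_{t₁}` (when `s t₁ < i_{t₁}`) would descend
as well; otherwise `s t₀ ≤ i_{t₀} ≤ i_{t₁} ≤ s t₁`. So `s` is monotone and `m ∈ B_{nd}`.
-/

lemma Finsupp.sum_single_graph_apply {ι β : Type*} [Fintype ι] [DecidableEq β]
    (g : ι → β) (e : ι → ℕ) (b : β) (j : ι) :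
    (∑ j', Finsupp.single (g j', j') (e j')) (b, j) = if g j = b then e j else 0 := by
  classical
  rw [Finsupp.finsetSum_apply, Finset.sum_eq_single j]
  · simp [Finsupp.single_apply]
  · intro j' _ hj'
    simp [hj']
  · simp

lemma Finsupp.sum_single_graph_one_le_iff {ι β : Type*} [Fintype ι] (c : ι → β)
    (u : β × ι →₀ ℕ) : ∑ j, Finsupp.single (c j, j) 1 ≤ u ↔ ∀ j, u (c j, j) ≠ 0 := by
  classical
  simp only [Finsupp.le_def, Prod.forall, Finsupp.sum_single_graph_apply]
  refine ⟨fun hc j => Nat.one_le_iff_ne_zero.1 (by simpa using hc (c j) j), fun hc b j => ?_⟩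
  split_ifs with hb
  · exact Nat.one_le_iff_ne_zero.2 (hb ▸ hc j)
  · exact Nat.zero_le _

lemma monomial_mem_boxIdeal_iff {k : Type} [Field k] {n d : ℕ} (u : Fin n × Fin d →₀ ℕ) :
    monomial u 1 ∈ BoxIdeal k n d ↔ ∃ c : Fin d → Fin n, Monotone c ∧ ∀ j, u (c j, j) ≠ 0 := by
  classical
  have hgen : {f | ∃ c : Fin d → Fin n, Monotone c ∧ f = ∏ j, (X (c j, j) : MvPolynomial _ k)} =
      (fun w => monomial w 1) ''
        {w | ∃ c : Fin d → Fin n, Monotone c ∧ w = ∑ j, Finsupp.single (c j, j) 1} := by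
    ext f
    simp [monomial_sum_one, X, eq_comm]
  rw [BoxIdeal, hgen, mem_ideal_span_monomial_image]
  simp only [support_monomial, one_ne_zero, if_false, Finset.mem_singleton, forall_eq,
    Set.mem_ofPred_eq]
  constructor
  · rintro ⟨_, ⟨c, hc, rfl⟩, hle⟩
    exact ⟨c, hc, (Finsupp.sum_single_graph_one_le_iff c u).1 hle⟩
  · rintro ⟨c, hc, hu⟩
    exact ⟨_, ⟨c, hc, rfl⟩, (Finsupp.sum_single_graph_one_le_iff c u).2 hu⟩

lemma prod_ite_X_mul_monomial_mem_boxIdeal_iff {k : Type} [Field k] {n d : ℕ}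
    (i : Fin d → Fin n) (a : Fin n) (u : Fin n × Fin d →₀ ℕ) :
    (∏ j, if i j ≠ a then X (a, j) else 1) * monomial u 1 ∈ BoxIdeal k n d ↔
      ∃ c : Fin d → Fin n, Monotone c ∧ ∀ j, u (c j, j) ≠ 0 ∨ (c j = a ∧ i j ≠ a) := by
  have hpush : (∏ j, if i j ≠ a then X (a, j) else 1 : MvPolynomial (Fin n × Fin d) k) =
      monomial (∑ j, Finsupp.single (a, j) (if i j ≠ a then 1 else 0)) 1 := by
    rw [monomial_sum_one]
    refine Finset.prod_congr rfl fun j _ => ?_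
    split_ifs <;> simp [X]
  rw [hpush, monomial_mul, one_mul, monomial_mem_boxIdeal_iff]
  simp only [Finsupp.add_apply, Finsupp.sum_single_graph_apply]
  refine exists_congr fun c => and_congr_right fun _ => forall_congr' fun j => ?_
  grind

lemma existsUnique_ne_zero_of_sum_eq_card {β ι : Type*} [Fintype β] [Fintype ι]
    (u : β × ι → ℕ) (hsum : ∑ p, u p = Fintype.card ι) (hcol : ∀ j, ∃ b, u (b, j) ≠ 0) :
    ∀ j, ∃! b, u (b, j) ≠ 0 := by
  have hcol_pos : ∀ j ∈ Finset.univ, 1 ≤ ∑ b, u (b, j) := fun j _ => by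
    obtain ⟨b, hb⟩ := hcol j
    exact (Nat.one_le_iff_ne_zero.2 hb).trans
      (Finset.single_le_sum (f := fun b => u (b, j)) (fun _ _ => Nat.zero_le _)
        (Finset.mem_univ b))
  have hcol_one : ∀ j ∈ Finset.univ, 1 = ∑ b, u (b, j) := by
    refine (Finset.sum_eq_sum_iff_of_le hcol_pos).1 ?_
    rw [Finset.sum_comm, ← Fintype.sum_prod_type', hsum]
    simp
  intro j
  obtain ⟨b, hb⟩ := hcol j
  refine ⟨b, hb, fun b' hb' => ?_⟩
  by_contra hne
  have := Finset.add_le_sum (f := fun b => u (b, j)) (fun _ _ => Nat.zero_le _)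
    (Finset.mem_univ b') (Finset.mem_univ b) hne
  have := hcol_one j (Finset.mem_univ j)
  omega

lemma monotone_of_forall_exists_monotone_push {α β : Type*} [Preorder α] [LinearOrder β]
    {i s : α → β} (hi : Monotone i)
    (h : ∀ a, ∃ c : α → β, Monotone c ∧ ∀ j, c j = s j ∨ (c j = a ∧ i j ≠ a)) :
    Monotone s := by
  intro t₀ t₁ ht
  by_contra! hlt
  have agrees : ∀ {a} {c : α → β}, (∀ j, c j = s j ∨ (c j = a ∧ i j ≠ a)) →
      ∀ j, i j = a → c j = s j :=
    fun hc j hj => (hc j).resolve_right fun h => h.2 hj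
  rcases lt_or_ge (i t₀) (s t₀) with h₀ | h₀
  · obtain ⟨c, hc, hcs⟩ := h (i t₀)
    have := hc ht
    have := agrees hcs t₀ rfl
    rcases hcs t₁ with h₁ | ⟨h₁, -⟩ <;> order
  rcases lt_or_ge (s t₁) (i t₁) with h₁ | h₁
  · obtain ⟨c, hc, hcs⟩ := h (i t₁)
    have := hc ht
    have := agrees hcs t₁ rfl
    rcases hcs t₀ with h₀' | ⟨h₀', -⟩ <;> order
  exact hlt.not_ge (h₀.trans ((hi ht).trans h₁))

theorem statement12 (k : Type) [Field k] (n d : ℕ)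
    (i : Fin d → Fin n) (hi : Monotone i)
    (m : MvPolynomial (Fin n × Fin d) k)
    (hm : IsMonomial k (Fin n × Fin d) m) (hmd : m.totalDegree = d)
    (h : ∀ a : Fin n,
      (∏ j : Fin d, if i j ≠ a then X (a, j) else 1) * m ∈ BoxIdeal k n d) :
    m ∈ BoxIdeal k n d := by
  obtain ⟨u, rfl⟩ := hm
  have push a := (prod_ite_X_mul_monomial_mem_boxIdeal_iff i a u).1 (h a)
  have hcol : ∀ j, ∃ b, u (b, j) ≠ 0 := fun j => by
    obtain ⟨c, -, hc⟩ := push (i j)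
    exact ⟨c j, (hc j).resolve_right fun h => h.2 rfl⟩
  have hsum : ∑ p, u p = Fintype.card (Fin d) := by
    rw [totalDegree_monomial u one_ne_zero, Finsupp.sum_fintype _ _ fun _ => rfl] at hmd
    rw [hmd, Fintype.card_fin]
  choose s hs hs_unique using existsUnique_ne_zero_of_sum_eq_card u hsum hcol
  have hs_mono : Monotone s := monotone_of_forall_exists_monotone_push hi fun a => by
    obtain ⟨c, hc, hcu⟩ := push a
    exact ⟨c, hc, fun j => (hcu j).imp_left (hs_unique j _)⟩
  exact (monomial_mem_boxIdeal_iff u).2 ⟨s, hs_mono, hs⟩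

end
end

section
/- Let f be a generator of P_{nd}, written f = ∏_{s=1}^{r} x_{i_s1}x_{i_s2}···x_{i_sd_s} with i₁ < i₂ < ··· < i_r, each d_s ≥ 1 and d₁+···+d_r = d. Let m be a monomial of degree d in S̃ such that for every s with 1 ≤ s ≤ r, the monomial x_{i_s(d_s+1)}x_{i_s(d_s+2)}···x_{i_sd}·m lies in P_{nd} (i.e., is divisible by a generator of P_{nd}). Then m itself lies in P_{nd}. Consequently, a proper first order deformation of a generator of P_{nd} cannot vanish when pushed toward every vertex, so it can be pushed to at least one vertex. -/
/-!
A monomial `m` lies in `P_{nd}` exactly when `d ≤ ∑ i, c i`, where `c i` is the length of the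
longest initial run `x_{i0} x_{i1} ⋯` of variables of row `i` dividing `m`: one can then pick
`e' ≤ c` with `∑ e' = d`. Multiplying `m` by the tail `x_{i_s(d_s+1)} ⋯ x_{i_sd}` of row `i_s`
leaves the other rows alone and can lengthen the run of row `i_s` only past position `d_s` if
it already reached `d_s`. So if `∑ c < d`, the hypothesis for `s` forces `c i_s ≥ d_s` for
every `s`, whence `∑ c ≥ ∑ d_s = d`, a contradiction.
-/

open MvPolynomial

noncomputable section

namespace StdIdeal

section Indicator

variable {σ : Type} [Fintype σ]

def indicatorExp (P : σ → Prop) [DecidablePred P] : σ →₀ ℕ :=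
  Finsupp.equivFunOnFinite.symm fun p => if P p then 1 else 0

@[simp]
lemma indicatorExp_apply (P : σ → Prop) [DecidablePred P] (p : σ) :
    indicatorExp P p = if P p then 1 else 0 := rfl

lemma prod_ite_X_eq_monomial {k : Type} [CommSemiring k] (P : σ → Prop) [DecidablePred P] :
    (∏ p, if P p then X p else 1 : MvPolynomial σ k) = monomial (indicatorExp P) 1 := by
  rw [monomial_eq, C_1, one_mul, Finsupp.prod_fintype _ _ fun _ => pow_zero _]
  refine Finset.prod_congr rfl fun p _ => ?_
  split_ifs with hp <;> simp [hp]

end Indicator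

variable {n d : ℕ}

def tailExp (e : Fin n → ℕ) (s : Fin n) : Fin n × Fin d →₀ ℕ :=
  indicatorExp fun p => p.1 = s ∧ e s ≤ (p.2 : ℕ)

lemma prod_tail_eq_monomial {k : Type} [CommSemiring k] (e : Fin n → ℕ) (s : Fin n) :
    (∏ j : Fin d, if e s ≤ (j : ℕ) then X (s, j) else 1 : MvPolynomial (Fin n × Fin d) k)
      = monomial (tailExp e s) 1 := by
  rw [tailExp, ← prod_ite_X_eq_monomial, Fintype.prod_prod_type, Finset.prod_eq_single s]
  · simp
  · intro i _ hi
    simp [hi]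
  · simp

variable {k : Type} [Field k]

lemma eq_span_monomial :
    StdIdeal k n d = Ideal.span ((fun u => monomial u (1 : k)) ''
      {u | ∃ e : Fin n → ℕ, ∑ i, e i = d ∧ u = indicatorExp fun p => (p.2 : ℕ) < e p.1}) := by
  unfold StdIdeal
  congr 1
  ext f
  constructor
  · rintro ⟨e, he, rfl⟩
    exact ⟨_, ⟨e, he, rfl⟩, (prod_ite_X_eq_monomial _).symm⟩
  · rintro ⟨_, ⟨e, he, rfl⟩, rfl⟩
    exact ⟨e, he, (prod_ite_X_eq_monomial _).symm⟩

/-- Length of the longest run `x_{i0} x_{i1} ⋯` of variables of row `i` dividing `x^u`. -/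
def runLength (u : Fin n × Fin d →₀ ℕ) (i : Fin n) : ℕ :=
  Nat.findGreatest (fun t => ∀ j : Fin d, (j : ℕ) < t → 1 ≤ u (i, j)) d

lemma runLength_le (u : Fin n × Fin d →₀ ℕ) (i : Fin n) : runLength u i ≤ d :=
  Nat.findGreatest_le d

lemma one_le_of_lt_runLength {u : Fin n × Fin d →₀ ℕ} {i : Fin n} {j : Fin d}
    (hj : (j : ℕ) < runLength u i) : 1 ≤ u (i, j) :=
  Nat.findGreatest_spec (P := fun t => ∀ j : Fin d, (j : ℕ) < t → 1 ≤ u (i, j))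
    (Nat.zero_le d) (fun _ h => absurd h (Nat.not_lt_zero _)) j hj

lemma le_runLength {u : Fin n × Fin d →₀ ℕ} {i : Fin n} {t : ℕ} (ht : t ≤ d)
    (h : ∀ j : Fin d, (j : ℕ) < t → 1 ≤ u (i, j)) : t ≤ runLength u i :=
  Nat.le_findGreatest ht h

lemma min_runLength_add_le {u v : Fin n × Fin d →₀ ℕ} {i : Fin n} {t : ℕ}
    (hv : ∀ j : Fin d, (j : ℕ) < t → v (i, j) = 0) :
    min (runLength (u + v) i) t ≤ runLength u i := by
  refine le_runLength ((min_le_left _ _).trans (runLength_le _ i)) fun j hj => ?_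
  have huv := one_le_of_lt_runLength (hj.trans_le (min_le_left _ _))
  rw [Finsupp.add_apply, hv j (hj.trans_le (min_le_right _ _)), add_zero] at huv
  exact huv

theorem monomial_mem_iff (u : Fin n × Fin d →₀ ℕ) :
    monomial u (1 : k) ∈ StdIdeal k n d ↔ d ≤ ∑ i, runLength u i := by
  classical
  rw [eq_span_monomial, mem_ideal_span_monomial_image, support_monomial, if_neg one_ne_zero]
  simp only [Finset.mem_singleton, forall_eq]
  constructor
  · rintro ⟨_, ⟨e, he, rfl⟩, hle⟩
    calc d = ∑ i, e i := he.symm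
      _ ≤ ∑ i, runLength u i := Finset.sum_le_sum fun i _ => le_runLength ?_ fun j hj => ?_
    · exact he ▸ Finset.single_le_sum (fun _ _ => Nat.zero_le _) (Finset.mem_univ i)
    · simpa [hj] using hle (i, j)
  · intro hd
    obtain ⟨e, hle, he⟩ := Finsupp.exists_le_degree_eq
      (Finsupp.equivFunOnFinite.symm (runLength u)) d (by rwa [Finsupp.degree_eq_sum])
    refine ⟨_, ⟨e, by rwa [← Finsupp.degree_eq_sum], rfl⟩, fun p => ?_⟩
    rw [indicatorExp_apply]
    split_ifs with hp
    · exact one_le_of_lt_runLength (hp.trans_le (hle p.1))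
    · exact Nat.zero_le _

lemma le_runLength_of_tail_mul_mem {u : Fin n × Fin d →₀ ℕ} {e : Fin n → ℕ} {s : Fin n}
    (hmem : monomial (u + tailExp e s) (1 : k) ∈ StdIdeal k n d)
    (hlt : ∑ i, runLength u i < d) : e s ≤ runLength u s := by
  set w := u + tailExp e s
  have hrow : min (runLength w s) (e s) ≤ runLength u s :=
    min_runLength_add_le fun j hj => by simp [tailExp, Nat.not_le.mpr hj]
  have hother : ∀ i ∈ Finset.univ.erase s, runLength w i ≤ runLength u i := fun i hi => by
    have hmin : min (runLength w i) d ≤ runLength u i :=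
      min_runLength_add_le fun j _ => by simp [tailExp, Finset.ne_of_mem_erase hi]
    rwa [min_eq_left (runLength_le w i)] at hmin
  have hsum := Finset.sum_le_sum hother
  rw [monomial_mem_iff, ← Finset.add_sum_erase _ _ (Finset.mem_univ s)] at hmem
  rw [← Finset.add_sum_erase _ _ (Finset.mem_univ s)] at hlt
  omega

end StdIdeal

open StdIdeal in
theorem statement13_general (k : Type) [Field k] (n d : ℕ)
    (e : Fin n → ℕ) (he : (∑ i, e i) = d)
    (m : MvPolynomial (Fin n × Fin d) k)
    (hm : IsMonomial k (Fin n × Fin d) m)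
    (h : ∀ i : Fin n, 0 < e i →
      (∏ j : Fin d, if e i ≤ (j : ℕ) then X (i, j) else 1) * m ∈ StdIdeal k n d) :
    m ∈ StdIdeal k n d := by
  obtain ⟨u, rfl⟩ := hm
  rw [monomial_mem_iff]
  by_contra! hlt
  have hrun : ∀ s, e s ≤ runLength u s := fun s => by
    rcases Nat.eq_zero_or_pos (e s) with hs | hs
    · exact hs ▸ Nat.zero_le _
    · refine le_runLength_of_tail_mul_mem (k := k) ?_ hlt
      simpa [prod_tail_eq_monomial, monomial_mul, add_comm] using h s hs
  have hsum := Finset.sum_le_sum fun s (_ : s ∈ Finset.univ) => hrun s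
  omega

theorem statement13 (k : Type) [Field k] (n d : ℕ)
    (e : Fin n → ℕ) (he : (∑ i, e i) = d)
    (m : MvPolynomial (Fin n × Fin d) k)
    (hm : IsMonomial k (Fin n × Fin d) m) (hmd : m.totalDegree = d)
    (h : ∀ i : Fin n, 0 < e i →
      (∏ j : Fin d, if e i ≤ (j : ℕ) then X (i, j) else 1) * m ∈ StdIdeal k n d) :
    m ∈ StdIdeal k n d :=
  statement13_general k n d e he m hm h

end
end

section
/- Let n' ≥ 3, let T be a spanning tree of the complete graph K_{n'} with edges labeled e_1,…,e_{n'−1}, and let x_{ia}x_{jb} be a generator of I_T with a ≠ b, where the unique path in T from i to j starts with the edge e_a = {i, i'} and ends with the edge e_b = {j', j}. If m is a monomial of degree 2 in S_T such that both x_{i'a}·m ∈ I_T and x_{j'b}·m ∈ I_T, then m ∈ I_T. (This is the key step showing that every first order deformation of a generator of I_T can be pushed to at least one vertex of I_T.) -/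
/-!
Since `I_T` is a monomial ideal, membership can be tested on each monomial `s` of `m`. If no
generator divides `s`, then a generator dividing `x_{i'a}·s` must be `x_{i'a}·x_{pc}` with
`x_{pc}` dividing `s`: `p` lies beyond `e_a` as seen from `i'`, and `e_c` is the first edge from
`p` towards `i'`. Likewise `x_{j'b}·x_{qd}` divides `x_{j'b}·s`. Because `e_a ≠ e_b`, both `i'`
and `j'` lie strictly inside the geodesic from `i` to `j`, so `p` and `q` are separated by `e_a`
and by `e_b`. Hence the geodesic from `p` to `q` starts with `e_c` and ends with `e_d`, and the
generator `x_{pc}·x_{qd}` divides `s`.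
-/

open MvPolynomial

noncomputable section

/-- The variables `x_{ia}` of `S_T`: pairs of a vertex `i` and a (labelled) edge `e_a`
incident to it. -/
def TreeVar (n' : ℕ) (edges : Fin (n' - 1) → Sym2 (Fin n')) : Type :=
  {p : Fin n' × Fin (n' - 1) // p.1 ∈ edges p.2}

/-- The polarization `I_T ⊆ S_T` attached to a (labelled) spanning tree `T`:
it is generated by the monomials `x_{ia}·x_{jb}` for the pairs of distinct vertices `i, j`
such that the unique path in `T` from `i` to `j` starts with the edge `e_a` and ends with
the edge `e_b` (first/last edges being detected by distances in `T`). -/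
def TreeIdeal (k : Type) [Field k] (n' : ℕ) (T : SimpleGraph (Fin n'))
    (edges : Fin (n' - 1) → Sym2 (Fin n')) :
    Ideal (MvPolynomial (TreeVar n' edges) k) :=
  Ideal.span {f | ∃ (i j : Fin n') (a b : Fin (n' - 1))
    (hia : i ∈ edges a) (hjb : j ∈ edges b),
    i ≠ j ∧
    (∃ i', edges a = s(i, i') ∧ T.dist i' j + 1 = T.dist i j) ∧
    (∃ j', edges b = s(j', j) ∧ T.dist i j' + 1 = T.dist i j) ∧
    f = X (⟨(i, a), hia⟩ : TreeVar n' edges) * X (⟨(j, b), hjb⟩ : TreeVar n' edges)}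

namespace SimpleGraph

variable {V : Type*} {G : SimpleGraph V}

theorem IsTree.length_eq_dist_of_isPath (hT : G.IsTree) {u v : V} {p : G.Walk u v}
    (hp : p.IsPath) : p.length = G.dist u v := by
  obtain ⟨q, hq, hql⟩ := hT.connected.exists_path_of_dist u v
  rw [(hT.existsUnique_path u v).unique hp hq, hql]

theorem Walk.dist_add_dist_of_length_eq_dist {u v w : V} {p : G.Walk u v}
    (hp : p.length = G.dist u v) (hw : w ∈ p.support) :
    G.dist u w + G.dist w v = G.dist u v := by
  classical
  rw [← length_eq_dist_of_subwalk hp (p.isSubwalk_takeUntil hw),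
    ← length_eq_dist_of_subwalk hp (p.isSubwalk_dropUntil hw), ← Walk.length_append,
    Walk.take_spec, hp]

/-- For an edge `xx'`, the equation `G.dist x z + 1 = G.dist x' z` places `z` on the `x`-side of
that edge; a geodesic ending at `x` stays on this side. -/
theorem IsTree.dist_add_one_eq_of_mem_support (hT : G.IsTree) {x x' z v : V}
    (hxx' : G.Adj x x') {p : G.Walk z x} (hp : p.length = G.dist z x)
    (hz : G.dist x z + 1 = G.dist x' z) (hv : v ∈ p.support) :
    G.dist x v + 1 = G.dist x' v := by
  have hzvx := p.dist_add_dist_of_length_eq_dist hp hv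
  have htri : G.dist x' z ≤ G.dist x' v + G.dist v z := hT.connected.dist_triangle
  have := G.dist_comm (u := z) (v := x)
  have := G.dist_comm (u := z) (v := v)
  have := G.dist_comm (u := v) (v := x)
  have := G.dist_comm (u := v) (v := x')
  rcases hT.dist_eq_dist_add_one_of_adj v hxx' with h | h <;> omega

/-- Geodesics from `z` to `x` and from `w` to `x'` stay on their own sides, so joining them
through `xx'` gives a path, and paths in a tree are geodesics. -/
theorem IsTree.dist_eq_add_of_separated (hT : G.IsTree) {x x' z w : V} (hxx' : G.Adj x x')
    (hz : G.dist x z + 1 = G.dist x' z) (hw : G.dist x' w + 1 = G.dist x w) :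
    G.dist z w = G.dist z x + 1 + G.dist x' w := by
  obtain ⟨P, hP, hPl⟩ := hT.connected.exists_path_of_dist z x
  obtain ⟨Q, hQ, hQl⟩ := hT.connected.exists_path_of_dist w x'
  have hsides : ∀ v ∈ P.support, v ∉ Q.support := fun v hvP hvQ => by
    have := hT.dist_add_one_eq_of_mem_support hxx' hPl hz hvP
    have := hT.dist_add_one_eq_of_mem_support hxx'.symm hQl hw hvQ
    omega
  have hR : (P.append (Walk.cons hxx' Q.reverse)).IsPath := by
    rw [Walk.isPath_def, Walk.support_append, Walk.support_cons, List.tail_cons,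
      Walk.support_reverse, List.nodup_append, List.nodup_reverse]
    exact ⟨hP.support_nodup, hQ.support_nodup,
      fun v hvP u hu huv => hsides v hvP (List.mem_reverse.mp (huv ▸ hu))⟩
  have hlen := hT.length_eq_dist_of_isPath hR
  rw [Walk.length_append, Walk.length_cons, Walk.length_reverse, hPl, hQl,
    dist_comm (u := w)] at hlen
  omega

def IsFirstEdge (G : SimpleGraph V) (e : Sym2 V) (i j : V) : Prop :=
  ∃ i', e = s(i, i') ∧ G.dist i' j + 1 = G.dist i j

theorem isFirstEdge_mk_iff {i i' j : V} :
    G.IsFirstEdge s(i, i') i j ↔ G.dist i' j + 1 = G.dist i j := by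
  simp only [IsFirstEdge, Sym2.congr_right, exists_eq_left']

theorem isFirstEdge_iff_exists_last {e : Sym2 V} {i j : V} :
    G.IsFirstEdge e j i ↔ ∃ j', e = s(j', j) ∧ G.dist i j' + 1 = G.dist i j := by
  simp only [IsFirstEdge, Sym2.eq_swap (a := j), dist_comm (u := i)]

/-- If `p` and `q` are separated by the edge `xx'`, the geodesic from `p` to `q` leaves `p`
along the same edge as the geodesic from `p` to `x'`. -/
theorem IsTree.isFirstEdge_of_separated (hT : G.IsTree) {x x' p q : V} {e : Sym2 V}
    (hxx' : G.Adj x x') (hp : G.dist x p + 1 = G.dist x' p)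
    (hq : G.dist x' q + 1 = G.dist x q) (he : e ∈ G.edgeSet) (hpe : G.IsFirstEdge e p x') :
    G.IsFirstEdge e p q := by
  obtain ⟨p₀, rfl, hstep⟩ := hpe
  refine ⟨p₀, rfl, ?_⟩
  have hpq := hT.dist_eq_add_of_separated hxx' hp hq
  have := G.dist_comm (u := p) (v := x)
  have := G.dist_comm (u := p₀) (v := x)
  have := G.dist_comm (u := p) (v := x')
  have := G.dist_comm (u := p₀) (v := x')
  rcases hT.dist_eq_dist_add_one_of_adj p₀ hxx' with h | h
  · -- `p₀` is across the edge from `p`, so the edge `pp₀` is `xx'` itself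
    have hpp₀ := hT.dist_eq_add_of_separated hxx' hp (w := p₀) (by omega)
    rw [dist_eq_one_iff_adj.mpr he] at hpp₀
    have hpx : p = x := hT.connected.dist_eq_zero_iff.mp (by omega)
    have hp₀x' : x' = p₀ := hT.connected.dist_eq_zero_iff.mp (by omega)
    rwa [hpx, ← hp₀x']
  · have hp₀q := hT.dist_eq_add_of_separated hxx' (z := p₀) (by omega) hq
    omega

theorem IsTree.dist_add_one_eq_of_far_side (hT : G.IsTree) {x x' y y' q : V}
    (hyy' : G.Adj y' y) (hx : G.dist y' x + 1 = G.dist y x)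
    (hx' : G.dist y' x' + 1 = G.dist y x') (hy' : G.dist x' y' + 1 = G.dist x y')
    (hq : G.dist y q + 1 = G.dist y' q) : G.dist x' q + 1 = G.dist x q := by
  have := hT.dist_eq_add_of_separated hyy' hx hq
  have := hT.dist_eq_add_of_separated hyy' hx' hq
  omega

/-- If `ii'` and `j'j` are distinct first and last edges of the geodesic from `i` to `j`,
then `i'` and `j'` both lie strictly inside it. -/
theorem IsTree.dist_add_one_eq_of_first_ne_last (hT : G.IsTree) {i i' j j' : V} (hi : G.Adj i i')
    (hj : G.Adj j' j) (hne : s(i, i') ≠ s(j', j)) (hfirst : G.dist i' j + 1 = G.dist i j)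
    (hlast : G.dist i j' + 1 = G.dist i j) :
    G.dist j' i' + 1 = G.dist j i' ∧ G.dist i' j' + 1 = G.dist i j' := by
  have := G.dist_comm (u := i) (v := j)
  have := G.dist_comm (u := i) (v := j')
  have := G.dist_comm (u := i') (v := j)
  have := G.dist_comm (u := i') (v := j')
  have hinner : G.dist j' i' + 1 = G.dist j i' := by
    rcases hT.dist_eq_dist_add_one_of_adj i' hj with h | h
    · have hii' := hT.dist_eq_add_of_separated hj (z := i) (w := i') (by omega) (by omega)
      rw [dist_eq_one_iff_adj.mpr hi] at hii'
      have hij' : i = j' := hT.connected.dist_eq_zero_iff.mp (by omega)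
      have hji' : j = i' := hT.connected.dist_eq_zero_iff.mp (by omega)
      exact absurd (by rw [hij', hji']) hne
    · omega
  exact ⟨hinner, by omega⟩

end SimpleGraph

theorem Finsupp.single_add_single_le {σ : Type*} {u v : σ} {s : σ →₀ ℕ} (huv : u ≠ v)
    (hu : Finsupp.single u 1 ≤ s) (hv : Finsupp.single v 1 ≤ s) :
    Finsupp.single u 1 + Finsupp.single v 1 ≤ s := by
  classical
  intro x
  rw [Finsupp.single_le_iff] at hu hv
  simp only [Finsupp.add_apply, Finsupp.single_apply]
  split_ifs <;> subst_vars <;> simp_all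

theorem Finsupp.single_add_single_le_single_add {σ : Type*} {u v w : σ} {s : σ →₀ ℕ}
    (h : Finsupp.single u 1 + Finsupp.single v 1 ≤ Finsupp.single w 1 + s) :
    Finsupp.single u 1 + Finsupp.single v 1 ≤ s ∨ (u = w ∧ Finsupp.single v 1 ≤ s) ∨
      (v = w ∧ Finsupp.single u 1 ≤ s) := by
  by_cases hu : u = w
  · subst hu
    exact Or.inr (Or.inl ⟨rfl, (add_le_add_iff_left _).mp h⟩)
  by_cases hv : v = w
  · subst hv
    rw [add_comm] at h
    exact Or.inr (Or.inr ⟨rfl, (add_le_add_iff_left _).mp h⟩)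
  refine Or.inl fun x => ?_
  by_cases hx : w = x
  · subst hx
    simp [hu, hv]
  · simpa [Finsupp.single_apply, hx] using h x

open SimpleGraph

section TreeIdeal

variable {k : Type} [Field k] {n' : ℕ} {T : SimpleGraph (Fin n')}
  {edges : Fin (n' - 1) → Sym2 (Fin n')}

/-- The generator condition of `TreeIdeal` in a form symmetric in the two variables. -/
def IsTreeGenerator (T : SimpleGraph (Fin n')) (u v : TreeVar n' edges) : Prop :=
  u.1.1 ≠ v.1.1 ∧ T.IsFirstEdge (edges u.1.2) u.1.1 v.1.1 ∧
    T.IsFirstEdge (edges v.1.2) v.1.1 u.1.1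

theorem IsTreeGenerator.symm {u v : TreeVar n' edges} (h : IsTreeGenerator T u v) :
    IsTreeGenerator T v u :=
  ⟨h.1.symm, h.2.2, h.2.1⟩

theorem treeIdeal_eq_span :
    TreeIdeal k n' T edges = Ideal.span ((fun s => monomial s (1 : k)) ''
      {s | ∃ u v, IsTreeGenerator T u v ∧ s = Finsupp.single u 1 + Finsupp.single v 1}) := by
  have hXX (u v : TreeVar n' edges) :
      monomial (Finsupp.single u 1 + Finsupp.single v 1) (1 : k) = X u * X v := by
    rw [X, X, monomial_mul, one_mul]
  unfold TreeIdeal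
  congr 1
  ext f
  constructor
  · rintro ⟨i, j, a, b, hia, hjb, hij, hfirst, hlast, rfl⟩
    exact ⟨_, ⟨⟨(i, a), hia⟩, ⟨(j, b), hjb⟩,
      ⟨hij, hfirst, isFirstEdge_iff_exists_last.mpr hlast⟩, rfl⟩, hXX _ _⟩
  · rintro ⟨_, ⟨⟨⟨i, a⟩, hia⟩, ⟨⟨j, b⟩, hjb⟩, ⟨hij, hfirst, hlast⟩, rfl⟩,
      rfl⟩
    exact ⟨i, j, a, b, hia, hjb, hij, hfirst, isFirstEdge_iff_exists_last.mp hlast, hXX _ _⟩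

theorem mem_treeIdeal_iff {f : MvPolynomial (TreeVar n' edges) k} :
    f ∈ TreeIdeal k n' T edges ↔ ∀ s ∈ f.support, ∃ u v, IsTreeGenerator T u v ∧
      Finsupp.single u 1 + Finsupp.single v 1 ≤ s := by
  rw [treeIdeal_eq_span, mem_ideal_span_monomial_image]
  refine forall₂_congr fun s _ => ⟨?_, ?_⟩
  · rintro ⟨_, ⟨u, v, huv, rfl⟩, hle⟩
    exact ⟨u, v, huv, hle⟩
  · rintro ⟨u, v, huv, hle⟩
    exact ⟨_, ⟨u, v, huv, rfl⟩, hle⟩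

theorem exists_isTreeGenerator_of_X_mul_mem {w : TreeVar n' edges}
    {f : MvPolynomial (TreeVar n' edges) k} (hf : X w * f ∈ TreeIdeal k n' T edges)
    {s : TreeVar n' edges →₀ ℕ} (hs : s ∈ f.support) :
    (∃ u v, IsTreeGenerator T u v ∧ Finsupp.single u 1 + Finsupp.single v 1 ≤ s) ∨
      ∃ v, IsTreeGenerator T w v ∧ Finsupp.single v 1 ≤ s := by
  obtain ⟨u, v, huv, hle⟩ := mem_treeIdeal_iff.mp hf (Finsupp.single w 1 + s) (by
    rw [support_X_mul]
    exact Finset.mem_map_of_mem _ hs)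
  rcases Finsupp.single_add_single_le_single_add hle with hle | ⟨rfl, hv⟩ | ⟨rfl, hu⟩
  · exact Or.inl ⟨u, v, huv, hle⟩
  · exact Or.inr ⟨v, huv, hv⟩
  · exact Or.inr ⟨u, huv.symm, hu⟩

theorem isTreeGenerator_of_partners (hT : T.IsTree)
    (hinj : Function.Injective edges) (hrange : Set.range edges = T.edgeSet)
    {i j i' j' : Fin n'} {a b : Fin (n' - 1)} (hab : a ≠ b) (hi'a : i' ∈ edges a)
    (hj'b : j' ∈ edges b) (hea : edges a = s(i, i')) (heb : edges b = s(j', j))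
    (hfirst : T.dist i' j + 1 = T.dist i j) (hlast : T.dist i j' + 1 = T.dist i j)
    {w z : TreeVar n' edges} (hw : IsTreeGenerator T ⟨(i', a), hi'a⟩ w)
    (hz : IsTreeGenerator T ⟨(j', b), hj'b⟩ z) :
    IsTreeGenerator T w z := by
  rcases w with ⟨⟨p, c⟩, hpc⟩
  rcases z with ⟨⟨q, d⟩, hqd⟩
  obtain ⟨-, hp, hpi'⟩ := hw
  obtain ⟨-, hq, hqj'⟩ := hz
  have hedge (t : Fin (n' - 1)) : edges t ∈ T.edgeSet := hrange ▸ ⟨t, rfl⟩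
  have hi : T.Adj i i' := by simpa [hea] using hedge a
  have hj : T.Adj j' j := by simpa [heb] using hedge b
  change T.IsFirstEdge (edges a) i' p at hp
  change T.IsFirstEdge (edges b) j' q at hq
  -- `p` is on the `i`-side of `e_a` and `q` on the `j`-side of `e_b`
  rw [hea, Sym2.eq_swap, isFirstEdge_mk_iff] at hp
  rw [heb, isFirstEdge_mk_iff] at hq
  obtain ⟨hji', hij'⟩ :=
    hT.dist_add_one_eq_of_first_ne_last hi hj (hea ▸ heb ▸ hinj.ne hab) hfirst hlast
  have hji : T.dist j' i + 1 = T.dist j i := by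
    rwa [dist_comm, T.dist_comm (u := j)]
  have hq' := hT.dist_add_one_eq_of_far_side hj hji hji' hij' hq
  have hp' := hT.dist_add_one_eq_of_far_side hi.symm hfirst hij' hji' hp
  refine ⟨fun hpq => ?_, hT.isFirstEdge_of_separated hi hp hq' (hedge c) hpi',
    hT.isFirstEdge_of_separated hj.symm hq hp' (hedge d) hqj'⟩
  change p = q at hpq
  subst hpq
  omega

end TreeIdeal

theorem statement16_general (k : Type) [Field k] (n' : ℕ)
    (T : SimpleGraph (Fin n')) (hT : T.IsTree)
    (edges : Fin (n' - 1) → Sym2 (Fin n')) (hinj : Function.Injective edges)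
    (hrange : Set.range edges = T.edgeSet)
    (i j i' j' : Fin n') (a b : Fin (n' - 1)) (hab : a ≠ b)
    (hi'a : i' ∈ edges a) (hj'b : j' ∈ edges b)
    (hea : edges a = s(i, i')) (heb : edges b = s(j', j))
    (hfirst : T.dist i' j + 1 = T.dist i j) (hlast : T.dist i j' + 1 = T.dist i j)
    (m : MvPolynomial (TreeVar n' edges) k)
    (h1 : (X (⟨(i', a), hi'a⟩ : TreeVar n' edges) : MvPolynomial (TreeVar n' edges) k) * m ∈
      TreeIdeal k n' T edges)
    (h2 : (X (⟨(j', b), hj'b⟩ : TreeVar n' edges) : MvPolynomial (TreeVar n' edges) k) * m ∈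
      TreeIdeal k n' T edges) :
    m ∈ TreeIdeal k n' T edges := by
  refine mem_treeIdeal_iff.mpr fun s hs => ?_
  rcases exists_isTreeGenerator_of_X_mul_mem h1 hs with hdiv | ⟨w, hw, hws⟩
  · exact hdiv
  rcases exists_isTreeGenerator_of_X_mul_mem h2 hs with hdiv | ⟨z, hz, hzs⟩
  · exact hdiv
  have hwz := isTreeGenerator_of_partners hT hinj hrange hab hi'a hj'b hea heb
    hfirst hlast hw hz
  exact ⟨w, z, hwz, Finsupp.single_add_single_le (fun h => hwz.1 (congrArg (·.1.1) h)) hws hzs⟩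

theorem statement16 (k : Type) [Field k] (n' : ℕ) (hn : 3 ≤ n')
    (T : SimpleGraph (Fin n')) (hT : T.IsTree)
    (edges : Fin (n' - 1) → Sym2 (Fin n')) (hinj : Function.Injective edges)
    (hrange : Set.range edges = T.edgeSet)
    (i j i' j' : Fin n') (a b : Fin (n' - 1)) (hab : a ≠ b) (hij : i ≠ j)
    (hia : i ∈ edges a) (hi'a : i' ∈ edges a) (hjb : j ∈ edges b) (hj'b : j' ∈ edges b)
    (hea : edges a = s(i, i')) (heb : edges b = s(j', j))
    (hfirst : T.dist i' j + 1 = T.dist i j) (hlast : T.dist i j' + 1 = T.dist i j)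
    (m : MvPolynomial (TreeVar n' edges) k)
    (hm : IsMonomial k (TreeVar n' edges) m) (hmd : m.totalDegree = 2)
    (h1 : (X (⟨(i', a), hi'a⟩ : TreeVar n' edges) : MvPolynomial (TreeVar n' edges) k) * m ∈
      TreeIdeal k n' T edges)
    (h2 : (X (⟨(j', b), hj'b⟩ : TreeVar n' edges) : MvPolynomial (TreeVar n' edges) k) * m ∈
      TreeIdeal k n' T edges) :
    m ∈ TreeIdeal k n' T edges :=
  statement16_general k n' T hT edges hinj hrange i j i' j' a b hab hi'a hj'b hea heb hfirst hlast m
    h1 h2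

end
end
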